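/- arXiv:1810.11788 — 3 statements merged into one kernel-verified Lean document; each statement's English description precedes it below -/
import Mathlib

section
/- Let ρ̄ : (0,1] → ℝ be differentiable with ρ̄(1) > 0, let p̄ : (0,1] → ℝ satisfy 0 ≤ p̄(τ) ≤ ρ̄(τ)/3 for all τ ∈ (0,1], and suppose ρ̄ satisfies the background Euler equation ∂_τ ρ̄(τ) = (3/τ)(ρ̄(τ) + p̄(τ)) on (0,1]. Then for every τ ∈ (0,1] one has 3τ³·ρ̄(1) ≤ ∂_τ ρ̄(τ) ≤ 4τ²·ρ̄(1). -/
/-!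
The Euler equation reads `τ ρ̄' = 3 (ρ̄ + p̄)`, which `0 ≤ p̄ ≤ ρ̄ / 3` squeezes between `3 ρ̄` and
`4 ρ̄`. Hence `ρ̄ / τ³` is nondecreasing and `ρ̄ / τ⁴` nonincreasing on `(0,1]`, which gives
`τ⁴ ρ̄(1) ≤ ρ̄(τ) ≤ τ³ ρ̄(1)`; inserting these into `ρ̄' = (3/τ)(ρ̄ + p̄)` yields both bounds.
-/

open Set

lemma hasDerivAt_div_pow {f : ℝ → ℝ} {f' x : ℝ} (hf : HasDerivAt f f' x) (hx : x ≠ 0) (n : ℕ) :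
    HasDerivAt (fun y => f y / y ^ n) ((x * f' - n * f x) / x ^ (n + 1)) x := by
  refine (hf.div (hasDerivAt_pow n x) (pow_ne_zero n hx)).congr_deriv ?_
  rcases n with _ | n
  · simp [field]
  · simp [field]
    ring

section DivPow

variable {f f' : ℝ → ℝ} {s : Set ℝ}

lemma monotoneOn_div_pow_of_le_mul_deriv (hs : Convex ℝ s) (hs₀ : ∀ x ∈ s, 0 < x)
    (hf : ∀ x ∈ s, HasDerivAt f (f' x) x) (n : ℕ) (h : ∀ x ∈ s, n * f x ≤ x * f' x) :
    MonotoneOn (fun x => f x / x ^ n) s := by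
  have hderiv : ∀ x ∈ s, HasDerivAt (fun y => f y / y ^ n)
      ((x * f' x - n * f x) / x ^ (n + 1)) x :=
    fun x hx => hasDerivAt_div_pow (hf x hx) (hs₀ x hx).ne' n
  refine monotoneOn_of_hasDerivWithinAt_nonneg hs
    (fun x hx => (hderiv x hx).continuousAt.continuousWithinAt)
    (fun x hx => (hderiv x (interior_subset hx)).hasDerivWithinAt) fun x hx => ?_
  have hx := interior_subset hx
  have := hs₀ x hx
  exact div_nonneg (sub_nonneg.mpr (h x hx)) (by positivity)

lemma antitoneOn_div_pow_of_mul_deriv_le (hs : Convex ℝ s) (hs₀ : ∀ x ∈ s, 0 < x)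
    (hf : ∀ x ∈ s, HasDerivAt f (f' x) x) (n : ℕ) (h : ∀ x ∈ s, x * f' x ≤ n * f x) :
    AntitoneOn (fun x => f x / x ^ n) s := by
  have hderiv : ∀ x ∈ s, HasDerivAt (fun y => f y / y ^ n)
      ((x * f' x - n * f x) / x ^ (n + 1)) x :=
    fun x hx => hasDerivAt_div_pow (hf x hx) (hs₀ x hx).ne' n
  refine antitoneOn_of_hasDerivWithinAt_nonpos hs
    (fun x hx => (hderiv x hx).continuousAt.continuousWithinAt)
    (fun x hx => (hderiv x (interior_subset hx)).hasDerivWithinAt) fun x hx => ?_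
  have hx := interior_subset hx
  have := hs₀ x hx
  exact div_nonpos_of_nonpos_of_nonneg (sub_nonpos.mpr (h x hx)) (by positivity)

end DivPow

section Background

variable {ρ p : ℝ → ℝ}

lemma background_density_le_pow_three_mul
    (hp : ∀ τ ∈ Ioc (0:ℝ) 1, 0 ≤ p τ)
    (heuler : ∀ τ ∈ Ioc (0:ℝ) 1, HasDerivAt ρ ((3 / τ) * (ρ τ + p τ)) τ)
    {τ : ℝ} (hτ : τ ∈ Ioc (0:ℝ) 1) : ρ τ ≤ τ ^ 3 * ρ 1 := by
  have hmono := monotoneOn_div_pow_of_le_mul_deriv (convex_Ioc 0 1) (fun x hx => hx.1) heuler 3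
    fun x hx => by rw [← mul_assoc, mul_div_cancel₀ _ hx.1.ne']; push_cast; linarith [hp x hx]
  have h := hmono hτ (right_mem_Ioc.mpr one_pos) hτ.2
  have := hτ.1
  simp only [one_pow, div_one] at h
  rwa [div_le_iff₀ (by positivity), mul_comm] at h

lemma pow_four_mul_le_background_density
    (hp : ∀ τ ∈ Ioc (0:ℝ) 1, p τ ≤ ρ τ / 3)
    (heuler : ∀ τ ∈ Ioc (0:ℝ) 1, HasDerivAt ρ ((3 / τ) * (ρ τ + p τ)) τ)
    {τ : ℝ} (hτ : τ ∈ Ioc (0:ℝ) 1) : τ ^ 4 * ρ 1 ≤ ρ τ := by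
  have hanti := antitoneOn_div_pow_of_mul_deriv_le (convex_Ioc 0 1) (fun x hx => hx.1) heuler 4
    fun x hx => by rw [← mul_assoc, mul_div_cancel₀ _ hx.1.ne']; push_cast; linarith [hp x hx]
  have h := hanti hτ (right_mem_Ioc.mpr one_pos) hτ.2
  have := hτ.1
  simp only [one_pow, div_one] at h
  rwa [le_div_iff₀ (by positivity), mul_comm] at h

end Background

theorem background_density_deriv_bounds_general (ρ p : ℝ → ℝ)
    (hp : ∀ τ ∈ Set.Ioc (0:ℝ) 1, 0 ≤ p τ ∧ p τ ≤ ρ τ / 3)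
    (heuler : ∀ τ ∈ Set.Ioc (0:ℝ) 1, HasDerivAt ρ ((3 / τ) * (ρ τ + p τ)) τ) :
    ∀ τ ∈ Set.Ioc (0:ℝ) 1, 3 * τ ^ 3 * ρ 1 ≤ deriv ρ τ ∧ deriv ρ τ ≤ 4 * τ ^ 2 * ρ 1 := by
  intro τ hτ
  have hupper := background_density_le_pow_three_mul (fun x hx => (hp x hx).1) heuler hτ
  have hlower := pow_four_mul_le_background_density (fun x hx => (hp x hx).2) heuler hτ
  obtain ⟨hp₀, hp₁⟩ := hp τ hτ
  have hτ₀ := hτ.1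
  rw [(heuler τ hτ).deriv, div_mul_eq_mul_div]
  constructor
  · rw [le_div_iff₀ hτ₀]
    linarith
  · rw [div_le_iff₀ hτ₀]
    linarith

/-- Bounds on the derivative of the background density:
`3τ³ ρ̄(1) ≤ ∂_τ ρ̄(τ) ≤ 4τ² ρ̄(1)` for `τ ∈ (0,1]`. -/
theorem background_density_deriv_bounds (ρ p : ℝ → ℝ)
    (hρ1 : 0 < ρ 1)
    (hp : ∀ τ ∈ Set.Ioc (0:ℝ) 1, 0 ≤ p τ ∧ p τ ≤ ρ τ / 3)
    (heuler : ∀ τ ∈ Set.Ioc (0:ℝ) 1, HasDerivAt ρ ((3 / τ) * (ρ τ + p τ)) τ) :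
    ∀ τ ∈ Set.Ioc (0:ℝ) 1, 3 * τ ^ 3 * ρ 1 ≤ deriv ρ τ ∧ deriv ρ τ ≤ 4 * τ ^ 2 * ρ 1 :=
  background_density_deriv_bounds_general ρ p hp heuler
end

section
/- Let Λ > 0, let ρ̄, p̄ : (0,1] → ℝ be differentiable with ρ̄(1) > 0, suppose 0 ≤ p̄(τ) ≤ ρ̄(τ)/3, that ρ̄ satisfies the background Euler equation ∂_τ ρ̄(τ) = (3/τ)(ρ̄(τ) + p̄(τ)) on (0,1], and that ∂_τ p̄(τ) = c̄²(τ)·∂_τ ρ̄(τ) for some function c̄² with 0 ≤ c̄²(τ) ≤ 1/3 for all τ ∈ (0,1]. Define ψ(τ) := Λ + ρ̄(τ) − (3/4)(ρ̄(τ) + p̄(τ)). Then ψ is differentiable on (0,1] with ∂_τ ψ(τ) = (1/4)·∂_τ ρ̄(τ) − (3/4)·∂_τ p̄(τ), and 0 ≤ ∂_τ ψ(τ) ≤ τ²·ρ̄(1) for every τ ∈ (0,1]. -/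
/-!
The Euler equation `ρ̄' = (3/τ)(ρ̄ + p̄)` with `p̄ ≥ 0` makes `ρ̄/τ³` nondecreasing, so
`ρ̄(τ) ≤ τ³ ρ̄(1)` on `(0,1]`. Since `p̄' = c̄² ρ̄'` with `0 ≤ c̄² ≤ 1/3` and `ρ̄' ≥ 0`, the derivative
`ψ' = (1 - 3c̄²) ρ̄'/4` lies between `0` and `ρ̄'/4 = 3(ρ̄ + p̄)/(4τ) ≤ ρ̄/τ ≤ τ² ρ̄(1)`.
-/

open Set

theorem hasDerivAt_div_pow_of_euler {ρ p : ℝ → ℝ} {τ : ℝ} (n : ℕ) (hτ : τ ≠ 0)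
    (h : HasDerivAt ρ (n / τ * (ρ τ + p τ)) τ) :
    HasDerivAt (fun t => ρ t / t ^ n) (n * p τ / τ ^ (n + 1)) τ := by
  refine (h.div (hasDerivAt_pow n τ) (pow_ne_zero n hτ)).congr_deriv ?_
  rcases n with _ | m
  · simp
  · simp only [Nat.add_sub_cancel]
    field_simp
    ring

theorem monotoneOn_div_pow_of_euler {ρ p : ℝ → ℝ} {s : Set ℝ} (n : ℕ) (hs : Convex ℝ s)
    (hs_pos : s ⊆ Ioi 0) (hp : ∀ τ ∈ s, 0 ≤ p τ)
    (h : ∀ τ ∈ s, HasDerivAt ρ (n / τ * (ρ τ + p τ)) τ) :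
    MonotoneOn (fun t => ρ t / t ^ n) s := by
  have hderiv : ∀ τ ∈ s, HasDerivAt (fun t => ρ t / t ^ n) (n * p τ / τ ^ (n + 1)) τ :=
    fun τ hτ => hasDerivAt_div_pow_of_euler n (hs_pos hτ).ne' (h τ hτ)
  refine monotoneOn_of_deriv_nonneg hs
    (fun τ hτ => (hderiv τ hτ).continuousAt.continuousWithinAt)
    (fun τ hτ => (hderiv τ (interior_subset hτ)).differentiableAt.differentiableWithinAt)
    fun τ hτ => ?_
  have hτs := interior_subset hτ
  have hτ_pos : 0 < τ := hs_pos hτs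
  rw [(hderiv τ hτs).deriv]
  have := hp τ hτs
  positivity

theorem le_pow_mul_of_euler {ρ p : ℝ → ℝ} (n : ℕ) (hp : ∀ τ ∈ Ioc (0 : ℝ) 1, 0 ≤ p τ)
    (h : ∀ τ ∈ Ioc (0 : ℝ) 1, HasDerivAt ρ (n / τ * (ρ τ + p τ)) τ) {τ : ℝ}
    (hτ : τ ∈ Ioc (0 : ℝ) 1) :
    ρ τ ≤ τ ^ n * ρ 1 := by
  have hmono := monotoneOn_div_pow_of_euler n (convex_Ioc 0 1) Ioc_subset_Ioi_self hp h
  have h_le : ρ τ / τ ^ n ≤ ρ 1 := by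
    simpa using hmono hτ (right_mem_Ioc.mpr one_pos) hτ.2
  rwa [div_le_iff₀ (pow_pos hτ.1 n), mul_comm] at h_le

theorem hasDerivAt_psi {ρ p : ℝ → ℝ} {ρ' p' τ : ℝ} (Λ : ℝ) (hρ : HasDerivAt ρ ρ' τ)
    (hp : HasDerivAt p p' τ) :
    HasDerivAt (fun t => Λ + ρ t - (3/4) * (ρ t + p t)) ((1/4) * ρ' - (3/4) * p') τ :=
  ((hρ.const_add Λ).sub ((hρ.add hp).const_mul (3/4 : ℝ))).congr_deriv (by ring)

theorem psi_deriv_mem_Icc {ρ' p' c : ℝ} (hρ' : 0 ≤ ρ') (hc : 0 ≤ c ∧ c ≤ 1/3)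
    (hp' : p' = c * ρ') :
    0 ≤ (1/4) * ρ' - (3/4) * p' ∧ (1/4) * ρ' - (3/4) * p' ≤ (1/4) * ρ' := by
  subst hp'
  constructor <;> nlinarith [hc.1, hc.2]

theorem euler_deriv_div_four_le {ρ p τ R : ℝ} (hτ : 0 < τ) (hp : p ≤ ρ / 3)
    (hρ : ρ ≤ τ ^ 3 * R) :
    (1/4) * ((3 / τ) * (ρ + p)) ≤ τ ^ 2 * R := by
  calc (1/4) * ((3 / τ) * (ρ + p)) ≤ ρ / τ := by
        rw [← sub_nonneg]
        have : ρ / τ - (1/4) * ((3 / τ) * (ρ + p)) = (ρ / 3 - p) * (3 / 4) / τ := by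
          field_simp; ring
        rw [this]
        have := sub_nonneg.mpr hp
        positivity
    _ ≤ τ ^ 3 * R / τ := by gcongr
    _ = τ ^ 2 * R := by field_simp

theorem background_psi_deriv_bounds_general (Λ : ℝ) (ρ p c2 : ℝ → ℝ)
    (hpb : ∀ τ ∈ Set.Ioc (0:ℝ) 1, 0 ≤ p τ ∧ p τ ≤ ρ τ / 3)
    (heuler : ∀ τ ∈ Set.Ioc (0:ℝ) 1, HasDerivAt ρ ((3 / τ) * (ρ τ + p τ)) τ)
    (hpd : ∀ τ ∈ Set.Ioc (0:ℝ) 1, HasDerivAt p (c2 τ * deriv ρ τ) τ)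
    (hc2 : ∀ τ ∈ Set.Ioc (0:ℝ) 1, 0 ≤ c2 τ ∧ c2 τ ≤ 1/3) :
    ∀ τ ∈ Set.Ioc (0:ℝ) 1,
      HasDerivAt (fun t => Λ + ρ t - (3/4) * (ρ t + p t))
        ((1/4) * deriv ρ τ - (3/4) * deriv p τ) τ ∧
      0 ≤ (1/4) * deriv ρ τ - (3/4) * deriv p τ ∧
      (1/4) * deriv ρ τ - (3/4) * deriv p τ ≤ τ ^ 2 * ρ 1 := by
  intro τ hτ
  obtain ⟨hp_nonneg, hp_le⟩ := hpb τ hτ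
  have hρ_deriv := (heuler τ hτ).deriv
  have hp_deriv := (hpd τ hτ).deriv
  have hρ_le : ρ τ ≤ τ ^ 3 * ρ 1 :=
    le_pow_mul_of_euler 3 (fun t ht => (hpb t ht).1) (by exact_mod_cast heuler) hτ
  have hρ'_nonneg : 0 ≤ deriv ρ τ := by
    rw [hρ_deriv]
    have hτ_pos := hτ.1
    have hρ_nonneg : 0 ≤ ρ τ := by linarith
    positivity
  obtain ⟨hψ'_nonneg, hψ'_le⟩ := psi_deriv_mem_Icc hρ'_nonneg (hc2 τ hτ) hp_deriv
  refine ⟨?_, hψ'_nonneg, hψ'_le.trans ?_⟩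
  · exact hasDerivAt_psi Λ (heuler τ hτ) (hpd τ hτ) |>.congr_deriv (by rw [hp_deriv, hρ_deriv])
  · rw [hρ_deriv]
    exact euler_deriv_div_four_le hτ.1 hp_le hρ_le

/-- The function `ψ(τ) = Λ + ρ̄ - (3/4)(ρ̄ + p̄)` is differentiable with
`∂_τ ψ = (1/4)∂_τ ρ̄ - (3/4)∂_τ p̄` and `0 ≤ ∂_τ ψ(τ) ≤ τ² ρ̄(1)` on `(0,1]`. -/
theorem background_psi_deriv_bounds (Λ : ℝ) (hΛ : 0 < Λ) (ρ p c2 : ℝ → ℝ)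
    (hρ1 : 0 < ρ 1)
    (hpb : ∀ τ ∈ Set.Ioc (0:ℝ) 1, 0 ≤ p τ ∧ p τ ≤ ρ τ / 3)
    (heuler : ∀ τ ∈ Set.Ioc (0:ℝ) 1, HasDerivAt ρ ((3 / τ) * (ρ τ + p τ)) τ)
    (hpd : ∀ τ ∈ Set.Ioc (0:ℝ) 1, HasDerivAt p (c2 τ * deriv ρ τ) τ)
    (hc2 : ∀ τ ∈ Set.Ioc (0:ℝ) 1, 0 ≤ c2 τ ∧ c2 τ ≤ 1/3) :
    ∀ τ ∈ Set.Ioc (0:ℝ) 1,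
      HasDerivAt (fun t => Λ + ρ t - (3/4) * (ρ t + p t))
        ((1/4) * deriv ρ τ - (3/4) * deriv p τ) τ ∧
      0 ≤ (1/4) * deriv ρ τ - (3/4) * deriv p τ ∧
      (1/4) * deriv ρ τ - (3/4) * deriv p τ ≤ τ ^ 2 * ρ 1 :=
  background_psi_deriv_bounds_general Λ ρ p c2 hpb heuler hpd hc2
end

section
/- Let Λ > 0 and let δ̂ be a real number with 0 < δ̂ < (1 + √(3/Λ))·min{3/4, Λ/(3+Λ)}. Set κ := δ̂/(2·(1 + √(3/Λ))) and C* := (√(3/Λ) + 1)^{−1}·(9/(4Λ²) + 2)^{−1/2}. Suppose τ > 0, β ≥ τ/(C*·δ̂), ω ≥ √(Λ/3), and s̄, χ are real numbers with s̄² ≤ 1/3, χ ≥ 0 and 1 − 3s̄² − χ ≥ δ̂, and set S := 1/(4ω⁴) + 2·(1 − 3s̄²)². Then ((1/κ)·(1 − 3s̄² − χ) − 1)·ω − (1/4)·(1/κ²)·(τ²/β²)·S ≥ 1 + √(Λ/3). -/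
set_option maxHeartbeats 1000000


/-- The remaining positivity estimate in Condition V for Makino-type (1) fluids:
with `κ = δ̂/(2(1+√(3/Λ)))`, `C* = (√(3/Λ)+1)⁻¹ (9/(4Λ²)+2)^(-1/2)`,
`β ≥ τ/(C* δ̂)`, `ω ≥ √(Λ/3)`, `s̄² ≤ 1/3`, `χ ≥ 0`, `1 - 3s̄² - χ ≥ δ̂`, and
`S = 1/(4ω⁴) + 2(1-3s̄²)²`, one has
`((1/κ)(1-3s̄²-χ) - 1) ω - (1/4)(1/κ²)(τ²/β²) S ≥ 1 + √(Λ/3)`. -/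
theorem condition_V_fluid_inequality (Λ δ κ Cstar τ β ω s χ : ℝ)
    (hΛ : 0 < Λ)
    (hδ0 : 0 < δ)
    (hδ1 : δ < (1 + Real.sqrt (3 / Λ)) * min (3/4) (Λ / (3 + Λ)))
    (hκ : κ = δ / (2 * (1 + Real.sqrt (3 / Λ))))
    (hC : Cstar = (Real.sqrt (3 / Λ) + 1)⁻¹ * (9 / (4 * Λ ^ 2) + 2) ^ (-(1/2) : ℝ))
    (hτ : 0 < τ) (hβ : τ / (Cstar * δ) ≤ β)
    (hω : Real.sqrt (Λ / 3) ≤ ω)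
    (hs : s ^ 2 ≤ 1/3) (hχ : 0 ≤ χ) (hgap : δ ≤ 1 - 3 * s ^ 2 - χ) :
    1 + Real.sqrt (Λ / 3) ≤
      ((1 / κ) * (1 - 3 * s ^ 2 - χ) - 1) * ω -
        (1/4) * (1 / κ ^ 2) * (τ ^ 2 / β ^ 2) * (1 / (4 * ω ^ 4) + 2 * (1 - 3 * s ^ 2) ^ 2) := by
  set a := Real.sqrt (3 / Λ) with ha_def
  have ha : 0 < a := Real.sqrt_pos.mpr (by positivity)
  have hinv : Real.sqrt (Λ / 3) = a⁻¹ := by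
    rw [ha_def, ← Real.sqrt_inv, inv_div]
  have hωpos : 0 < ω := lt_of_lt_of_le (by rw [hinv]; positivity) hω
  have hM : (0:ℝ) < 9 / (4 * Λ ^ 2) + 2 := by positivity
  have hCpos : 0 < Cstar := by rw [hC]; positivity
  have hβpos : 0 < β := lt_of_lt_of_le (by positivity) hβ
  -- square of Cstar
  have hCsq : Cstar ^ 2 * ((1 + a) ^ 2 * (9 / (4 * Λ ^ 2) + 2)) = 1 := by
    have h2 : ((9 / (4 * Λ ^ 2) + 2 : ℝ) ^ (-(1/2) : ℝ)) ^ 2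
        = (9 / (4 * Λ ^ 2) + 2)⁻¹ := by
      rw [← Real.rpow_natCast _ 2, ← Real.rpow_mul hM.le]
      norm_num
      exact Real.rpow_neg_one _
    rw [hC, mul_pow, h2]
    have h1a : (0:ℝ) < 1 + a := by linarith
    field_simp
    ring
  -- bound on τ²/β²
  have hτβ : τ ^ 2 / β ^ 2 ≤ Cstar ^ 2 * δ ^ 2 := by
    have h1 : τ ≤ β * (Cstar * δ) := (div_le_iff₀ (by positivity)).mp hβ
    rw [div_le_iff₀ (by positivity)]
    nlinarith
  -- bound on ω
  have hω2 : Λ / 3 ≤ ω ^ 2 := by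
    have := Real.sq_sqrt (show (0:ℝ) ≤ Λ / 3 by positivity)
    nlinarith [Real.sqrt_nonneg (Λ / 3)]
  have hω4 : Λ ^ 2 / 9 ≤ ω ^ 4 := by
    nlinarith [mul_le_mul hω2 hω2 (by positivity : (0:ℝ) ≤ Λ/3) (by positivity : (0:ℝ) ≤ ω^2)]
  have hSa : 1 / (4 * ω ^ 4) ≤ 9 / (4 * Λ ^ 2) := by
    rw [div_le_div_iff₀ (by positivity) (by positivity)]
    linarith
  have hSb : (1 - 3 * s ^ 2) ^ 2 ≤ 1 := by
    have h0 : 0 ≤ 1 - 3 * s ^ 2 := by linarith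
    have h1' : 1 - 3 * s ^ 2 ≤ 1 := by nlinarith [sq_nonneg s]
    calc (1 - 3 * s ^ 2) ^ 2 ≤ 1 ^ 2 := by gcongr
      _ = 1 := one_pow 2
  have hS : 1 / (4 * ω ^ 4) + 2 * (1 - 3 * s ^ 2) ^ 2 ≤ 9 / (4 * Λ ^ 2) + 2 := by
    linarith
  -- penalty bound
  have hκe : (1/4 : ℝ) * (1 / κ ^ 2) = (1 + a) ^ 2 / δ ^ 2 := by
    rw [hκ]
    have h1a : (0:ℝ) < 1 + a := by linarith
    field_simp
    ring
  have hpen : (1/4) * (1 / κ ^ 2) * (τ ^ 2 / β ^ 2) *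
      (1 / (4 * ω ^ 4) + 2 * (1 - 3 * s ^ 2) ^ 2) ≤ 1 := by
    rw [hκe]
    calc (1 + a) ^ 2 / δ ^ 2 * (τ ^ 2 / β ^ 2) *
          (1 / (4 * ω ^ 4) + 2 * (1 - 3 * s ^ 2) ^ 2)
        ≤ (1 + a) ^ 2 / δ ^ 2 * (Cstar ^ 2 * δ ^ 2) * (9 / (4 * Λ ^ 2) + 2) := by
          have hSnn : 0 ≤ 1 / (4 * ω ^ 4) + 2 * (1 - 3 * s ^ 2) ^ 2 := by positivity
          gcongr
      _ = Cstar ^ 2 * ((1 + a) ^ 2 * (9 / (4 * Λ ^ 2) + 2)) := by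
          field_simp
      _ = 1 := hCsq
  -- first term bound
  have hκinv : 1 / κ = 2 * (1 + a) / δ := by
    rw [hκ]
    have h1a : (0:ℝ) < 1 + a := by linarith
    field_simp
  have h1 : 1 + 2 * a ≤ (1 / κ) * (1 - 3 * s ^ 2 - χ) - 1 := by
    rw [hκinv]
    have hfac : (0:ℝ) ≤ 2 * (1 + a) / δ := by positivity
    have := mul_le_mul_of_nonneg_left hgap hfac
    have heq : 2 * (1 + a) / δ * δ = 2 * (1 + a) := by field_simp
    nlinarith
  have hfirst : 2 + a⁻¹ ≤ ((1 / κ) * (1 - 3 * s ^ 2 - χ) - 1) * ω := by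
    have hωa : a⁻¹ ≤ ω := by rw [← hinv]; exact hω
    have h2 : (1 + 2 * a) * a⁻¹ ≤ ((1 / κ) * (1 - 3 * s ^ 2 - χ) - 1) * ω := by
      apply mul_le_mul h1 hωa (by positivity) (by linarith)
    have h3 : (1 + 2 * a) * a⁻¹ = 2 + a⁻¹ := by field_simp; ring
    linarith [h2, h3.symm.le]
  rw [hinv]
  linarith
end
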